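/- arXiv:2401.14298 — 2 statements merged into one kernel-verified Lean document; each statement's English description precedes it below -/
import Mathlib

section
/- Let p > 2 be a prime, let u be a unit of ℤ_p (‖u‖_p = 1) that is not a square in ℚ_p, and set v = -1 if p ≡ 3 (mod 4) and v = -u if p ≡ 1 (mod 4). Then the ternary quadratic form Q₊(x) = x₁² - v·x₂² + p·x₃² over ℚ_p is anisotropic, and every anisotropic quadratic form Q on ℚ_p³ is linearly equivalent to t·Q₊ for some t ∈ ℚ_p^×. -/
open QuadraticMap
open scoped Matrix

/-!
Both halves rest on reduction mod `p` plus Hensel's lemma: for odd `p`, a unit of `ℤ_[p]` is a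
square as soon as its residue is, and binary forms with unit coefficients represent every unit
(Chevalley–Warning over `ZMod p`, then lift).

Anisotropy: `v` is a unit with non-square residue, so `x² - v y² ≡ 0 (mod p)` forces `p ∣ x, y`.
A zero of `Q₊` scaled to a primitive integral vector then also has `p ∣ z`, a contradiction.

Classification: diagonalise `Q` and rescale each coefficient by a square so that it has norm
`1` or `p⁻¹`. If all three norms agree, `Q` is isotropic. Otherwise, after permuting and possibly
scaling by `p`, `Q ≅ t ⟨α, β, p γ⟩` with units `α, β, γ`. Anisotropy makes `-αβ` a non-square,
so `αβ ≡ -v` modulo squares, and writing `γ = α x² + β y²` gives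
`⟨α, β⟩ ≅ ⟨γ, αβγ⟩ ≅ ⟨γ, -vγ⟩`, whence `Q ≅ tγ Q₊`.
-/

namespace QuadraticMap

section Equivalent

variable {R M₁ M₂ N : Type*} [CommSemiring R] [AddCommMonoid M₁] [AddCommMonoid M₂]
  [AddCommMonoid N] [Module R M₁] [Module R M₂] [Module R N]
  {Q₁ : QuadraticMap R M₁ N} {Q₂ : QuadraticMap R M₂ N}

theorem Equivalent.anisotropic (h : Q₁.Equivalent Q₂) (h₁ : Q₁.Anisotropic) :
    Q₂.Anisotropic := by
  obtain ⟨f⟩ := h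
  intro x hx
  have : f.symm x = 0 := h₁ _ (by rwa [← f.map_app, f.apply_symm_apply])
  simpa using congrArg f this

theorem Equivalent.smul (h : Q₁.Equivalent Q₂) (t : R) : (t • Q₁).Equivalent (t • Q₂) := by
  obtain ⟨f⟩ := h
  exact ⟨{ f.toLinearEquiv with map_app' := fun x => by simp [f.map_app] }⟩

theorem Anisotropic.of_smul {t : R} (h : (t • Q₁).Anisotropic) : Q₁.Anisotropic :=
  fun x hx => h x (by simp [hx])

end Equivalent

section WeightedSumSquares

variable {ι ι' R : Type*} [Fintype ι] [Fintype ι'] [CommSemiring R]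

theorem smul_weightedSumSquares (t : R) (w : ι → R) :
    t • weightedSumSquares R w = weightedSumSquares R (t • w) := by
  ext x
  simp [weightedSumSquares_apply, Finset.mul_sum, mul_assoc]

theorem equivalent_weightedSumSquares_comp (e : ι' ≃ ι) (w : ι → R) :
    (weightedSumSquares R w).Equivalent (weightedSumSquares R (w ∘ e)) :=
  ⟨{ LinearEquiv.funCongrLeft R R e with
      map_app' := fun x => by
        simp only [LinearEquiv.toFun_eq_coe, LinearEquiv.funCongrLeft_apply,
          weightedSumSquares_apply]
        exact e.sum_comp fun i => w i • (x i * x i) }⟩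

theorem Anisotropic.weightedSumSquares_ne_zero [DecidableEq ι] [Nontrivial R] {w : ι → R}
    (h : (weightedSumSquares R w).Anisotropic) (i : ι) : w i ≠ 0 := by
  intro hi
  have := h (Pi.single i 1) (by simp [weightedSumSquares_apply, Pi.single_apply, hi])
  simpa using congrFun this i

theorem equivalent_weightedSumSquares_rotate (a b c : R) :
    (weightedSumSquares R ![a, b, c]).Equivalent (weightedSumSquares R ![b, c, a]) := by
  convert equivalent_weightedSumSquares_comp (finRotate 3) ![a, b, c] using 2
  ext i; fin_cases i <;> rfl

theorem weightedSumSquares_fin_three_apply (w x : Fin 3 → R) :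
    weightedSumSquares R w x = w 0 * x 0 ^ 2 + w 1 * x 1 ^ 2 + w 2 * x 2 ^ 2 := by
  simp only [weightedSumSquares_apply, Fin.sum_univ_three, smul_eq_mul, pow_two]

end WeightedSumSquares

end QuadraticMap

namespace QuadraticForm

variable {ι K : Type*} [Fintype ι] [Field K]

theorem equivalent_weightedSumSquares_of_mul_sq {w w' k : ι → K} (hk : ∀ i, k i ≠ 0)
    (h : ∀ i, w' i * k i ^ 2 = w i) :
    (weightedSumSquares K w).Equivalent (weightedSumSquares K w') :=
  ⟨isometryEquivWeightedSumSquaresWeightedSumSquares (fun i => Units.mk0 (k i) (hk i)) h⟩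

theorem equivalent_weightedSumSquares_of_mul_sq_add_mul_sq {a b c d x y : K} (hd : d ≠ 0)
    (h : a * x ^ 2 + b * y ^ 2 = d) :
    (weightedSumSquares K ![d, a * b * d, c]).Equivalent (weightedSumSquares K ![a, b, c]) := by
  let M : Matrix (Fin 3) (Fin 3) K := !![x, -(b * y), 0; y, a * x, 0; 0, 0, 1]
  have hM : IsUnit M.det := by
    rw [isUnit_iff_ne_zero, Matrix.det_fin_three]
    convert hd using 1
    simp [M, ← h]
    ring
  refine ⟨{ M.toLinearEquiv' (M.invertibleOfIsUnitDet hM) with map_app' := fun v => ?_ }⟩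
  simp only [Matrix.toLinearEquiv'_apply, weightedSumSquares_fin_three_apply]
  change _ * (M *ᵥ v) 0 ^ 2 + _ * (M *ᵥ v) 1 ^ 2 + _ * (M *ᵥ v) 2 ^ 2 = _
  simp [M, Matrix.mulVec, dotProduct, Fin.sum_univ_three, ← h]
  ring

end QuadraticForm

theorem FiniteField.isSquare_mul_of_not_isSquare {F : Type*} [Field F] [Fintype F]
    [DecidableEq F] {a b : F} (ha : ¬IsSquare a) (hb : ¬IsSquare b) : IsSquare (a * b) := by
  have hab : a * b ≠ 0 := mul_ne_zero (by rintro rfl; exact ha IsSquare.zero)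
    (by rintro rfl; exact hb IsSquare.zero)
  rw [← quadraticChar_one_iff_isSquare hab, map_mul, quadraticChar_neg_one_iff_not_isSquare.mpr ha,
    quadraticChar_neg_one_iff_not_isSquare.mpr hb]
  norm_num

theorem eq_zero_of_sq_eq_mul_sq {F : Type*} [Field F] {a b c : F} (hc : ¬IsSquare c)
    (h : a ^ 2 = c * b ^ 2) : a = 0 ∧ b = 0 := by
  have hb : b = 0 := by
    by_contra hb
    exact hc ⟨a / b, by field_simp; rw [h]⟩
  exact ⟨by simpa [hb] using h, hb⟩

theorem Fin.exists_perm_apply_zero_apply_two {i j : Fin 3} (h : i ≠ j) :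
    ∃ σ : Equiv.Perm (Fin 3), σ 0 = i ∧ σ 2 = j := by
  revert i j
  decide

variable {p : ℕ} [Fact p.Prime]

namespace PadicInt

theorem toZMod_eq_zero_iff {z : ℤ_[p]} : toZMod z = 0 ↔ ‖z‖ < 1 := by
  rw [← RingHom.mem_ker, ker_toZMod, IsLocalRing.mem_maximalIdeal, mem_nonunits]

theorem toZMod_ne_zero_iff {z : ℤ_[p]} : toZMod z ≠ 0 ↔ ‖z‖ = 1 := by
  rw [Ne, toZMod_eq_zero_iff, not_lt, (norm_le_one z).ge_iff_eq', eq_comm]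

theorem isSquare_of_isSquare_toZMod (hp : p ≠ 2) {w : ℤ_[p]} (hw : toZMod w ≠ 0)
    (h : IsSquare (toZMod w)) : IsSquare w := by
  obtain ⟨r, hr⟩ := h
  obtain ⟨a, rfl⟩ := ZMod.ringHom_surjective toZMod r
  have ha : ‖a‖ = 1 := toZMod_ne_zero_iff.mp fun h0 => hw (by simp [hr, h0])
  have h2 : ‖(2 : ℤ_[p])‖ = 1 := by
    rw [← toZMod_ne_zero_iff, map_ofNat]
    exact Ring.two_ne_zero (by rwa [ZMod.ringChar_zmod_n])
  let F : Polynomial ℤ_[p] := .X ^ 2 - .C w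
  have hF : ‖F.aeval a‖ < ‖F.derivative.aeval a‖ ^ 2 := by
    have hFa : F.aeval a = a ^ 2 - w := by simp [F]
    have hF'a : F.derivative.aeval a = 2 * a := by simp [F, one_add_one_eq_two]
    rw [hFa, hF'a, norm_mul, h2, ha, mul_one, one_pow, ← toZMod_eq_zero_iff]
    simp [hr, pow_two]
  obtain ⟨z, hz, -⟩ := hensels_lemma hF
  exact ⟨z, by simpa [F, sub_eq_zero, pow_two, eq_comm] using hz⟩

theorem toZMod_eq_zero_of_sq_sub_mul_sq_add_p_mul_sq {v : ℤ_[p]}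
    (hv : ¬IsSquare (toZMod v)) {x y z : ℤ_[p]} (h : x ^ 2 - v * y ^ 2 + p * z ^ 2 = 0) :
    toZMod x = 0 ∧ toZMod y = 0 ∧ toZMod z = 0 := by
  have hxy := eq_zero_of_sq_eq_mul_sq hv (a := toZMod x) (b := toZMod y) <| by
    have := congrArg toZMod h
    simp only [map_add, map_sub, map_mul, map_pow, map_natCast, ZMod.natCast_self,
      zero_mul, add_zero, map_zero] at this
    linear_combination this
  have hdvd : ∀ {t : ℤ_[p]}, toZMod t = 0 → (p : ℤ_[p]) ∣ t := fun ht => by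
    rwa [← norm_lt_one_iff_dvd, ← toZMod_eq_zero_iff]
  obtain ⟨x', rfl⟩ := hdvd hxy.1
  obtain ⟨y', rfl⟩ := hdvd hxy.2
  have hp : (p : ℤ_[p]) ≠ 0 := Nat.cast_ne_zero.mpr (Fact.out : p.Prime).ne_zero
  have hz : z ^ 2 = p * (v * y' ^ 2 - x' ^ 2) :=
    mul_left_cancel₀ hp (by linear_combination h)
  refine ⟨by simp, by simp, pow_eq_zero_iff two_ne_zero |>.mp ?_⟩
  simpa using congrArg toZMod hz

end PadicInt

namespace Padic

open PadicInt QuadraticForm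

theorem isSquare_or_isSquare_mul (hp : p ≠ 2) {v : ℤ_[p]} (hv : ¬IsSquare (toZMod v))
    {w : ℚ_[p]} (hw : ‖w‖ = 1) : IsSquare w ∨ IsSquare ((v : ℚ_[p]) * w) := by
  let w' : ℤ_[p] := ⟨w, hw.le⟩
  have hw' : toZMod w' ≠ 0 := toZMod_ne_zero_iff.mpr hw
  have hv0 : toZMod v ≠ 0 := fun h => hv (h ▸ IsSquare.zero)
  by_cases hs : IsSquare (toZMod w')
  · exact .inl ((isSquare_of_isSquare_toZMod hp hw' hs).map PadicInt.Coe.ringHom)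
  · refine .inr ?_
    have hvw : IsSquare (v * w') := isSquare_of_isSquare_toZMod hp
      (by simpa using mul_ne_zero hv0 hw')
      (by simpa using FiniteField.isSquare_mul_of_not_isSquare hv hs)
    exact hvw.map PadicInt.Coe.ringHom

theorem exists_mul_sq_add_mul_sq_eq_of_toZMod (hp : p ≠ 2) {α β γ : ℤ_[p]} {A B : ZMod p}
    (hα : toZMod α ≠ 0) (hA : A ≠ 0) (h : toZMod α * A ^ 2 + toZMod β * B ^ 2 = toZMod γ) :
    ∃ x y : ℚ_[p], α * x ^ 2 + β * y ^ 2 = γ := by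
  obtain ⟨y, rfl⟩ := ZMod.ringHom_surjective toZMod B
  -- `α (γ - β y²)` reduces to the nonzero square `(α A)²`, so it is a square `z²`
  obtain ⟨z, hz⟩ := isSquare_of_isSquare_toZMod hp (w := α * (γ - β * y ^ 2))
    (by simp [← h, hα, hA]) ⟨toZMod α * A, by simp [← h]; ring⟩
  have hα' : (α : ℚ_[p]) ≠ 0 := coe_ne_zero.mpr fun h0 => hα (by rw [h0, map_zero])
  have hz' : (α : ℚ_[p]) * (γ - β * y ^ 2) = z * z := by
    exact_mod_cast congrArg ((↑) : ℤ_[p] → ℚ_[p]) hz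
  refine ⟨z / α, y, ?_⟩
  field_simp
  linear_combination -hz'

theorem exists_mul_sq_add_mul_sq_eq (hp : p ≠ 2) {a b c : ℚ_[p]} (ha : ‖a‖ = 1)
    (hb : ‖b‖ = 1) (hc : ‖c‖ = 1) : ∃ x y : ℚ_[p], a * x ^ 2 + b * y ^ 2 = c := by
  let α : ℤ_[p] := ⟨a, ha.le⟩
  let β : ℤ_[p] := ⟨b, hb.le⟩
  let γ : ℤ_[p] := ⟨c, hc.le⟩
  have hα : toZMod α ≠ 0 := toZMod_ne_zero_iff.mpr ha
  have hβ : toZMod β ≠ 0 := toZMod_ne_zero_iff.mpr hb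
  have hγ : toZMod γ ≠ 0 := toZMod_ne_zero_iff.mpr hc
  open Polynomial in
  obtain ⟨A, B, hAB⟩ := FiniteField.exists_root_sum_quadratic
    (f := C (toZMod α) * X ^ 2) (g := C (toZMod β) * X ^ 2 - C (toZMod γ))
    (degree_C_mul_X_pow 2 hα)
    (by rw [degree_sub_C (by rw [degree_C_mul_X_pow 2 hβ]; exact Nat.ofNat_pos'),
      degree_C_mul_X_pow 2 hβ]; rfl)
    (by rw [ZMod.card]; exact Nat.odd_iff.mp ((Fact.out : p.Prime).odd_of_ne_two hp))
  replace hAB : toZMod α * A ^ 2 + toZMod β * B ^ 2 = toZMod γ := by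
    simp only [Polynomial.eval_sub, Polynomial.eval_mul, Polynomial.eval_pow,
      Polynomial.eval_C, Polynomial.eval_X] at hAB
    linear_combination hAB
  rcases eq_or_ne A 0 with rfl | hA
  · have hB : B ≠ 0 := by
      rintro rfl
      exact hγ (by simpa using hAB.symm)
    obtain ⟨y, x, h⟩ := exists_mul_sq_add_mul_sq_eq_of_toZMod hp (β := α) (γ := γ) (B := 0)
      hβ hB (by linear_combination hAB)
    exact ⟨x, y, by linear_combination h⟩
  · exact exists_mul_sq_add_mul_sq_eq_of_toZMod hp hα hA hAB

theorem exists_norm_mul_sq_eq_one_or_eq_inv {x : ℚ_[p]} (hx : x ≠ 0) :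
    ∃ k : ℚ_[p], k ≠ 0 ∧ (‖x * k ^ 2‖ = 1 ∨ ‖x * k ^ 2‖ = (p : ℝ)⁻¹) := by
  have hp : (0 : ℝ) < p := by exact_mod_cast (Fact.out : p.Prime).pos
  set n := x.valuation
  refine ⟨(p : ℚ_[p]) ^ (-(n / 2)), zpow_ne_zero _ (by exact_mod_cast hp.ne'), ?_⟩
  have hnorm : ‖x * ((p : ℚ_[p]) ^ (-(n / 2))) ^ 2‖ = (p : ℝ) ^ (-(n % 2)) := by
    rw [norm_mul, norm_pow, norm_p_zpow, norm_eq_zpow_neg_valuation hx, ← zpow_natCast,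
      ← zpow_mul, ← zpow_add₀ hp.ne']
    congr 1
    omega
  rcases Int.emod_two_eq_zero_or_one n with h | h
  · exact .inl (by rw [hnorm, h]; simp)
  · exact .inr (by rw [hnorm, h]; simp)

theorem exists_equivalent_weightedSumSquares_norm {ι : Type*} [Fintype ι] {w : ι → ℚ_[p]}
    (hw : ∀ i, w i ≠ 0) :
    ∃ w' : ι → ℚ_[p], (∀ i, ‖w' i‖ = 1 ∨ ‖w' i‖ = (p : ℝ)⁻¹) ∧
      (weightedSumSquares ℚ_[p] w).Equivalent (weightedSumSquares ℚ_[p] w') := by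
  choose k hk hnorm using fun i => exists_norm_mul_sq_eq_one_or_eq_inv (hw i)
  exact ⟨_, hnorm, equivalent_weightedSumSquares_of_mul_sq (fun i => inv_ne_zero (hk i))
    fun i => by rw [inv_pow, mul_inv_cancel_right₀ (pow_ne_zero 2 (hk i))]⟩

theorem exists_eq_mul_coe_of_ne_zero {ι : Type*} [Finite ι] {x : ι → ℚ_[p]} (hx : x ≠ 0) :
    ∃ c : ℚ_[p], c ≠ 0 ∧ ∃ y : ι → ℤ_[p], (∀ i, (y i : ℚ_[p]) = c * x i) ∧ ∃ i, y i = 1 := by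
  obtain ⟨i₀, -⟩ := Function.ne_iff.mp hx
  have : Nonempty ι := ⟨i₀⟩
  obtain ⟨i, hi⟩ := Finite.exists_max fun j => ‖x j‖
  have hxi : x i ≠ 0 := fun h0 =>
    hx (funext fun j => norm_le_zero_iff.mp ((hi j).trans_eq (by rw [h0, norm_zero])))
  refine ⟨(x i)⁻¹, inv_ne_zero hxi, fun j => ⟨(x i)⁻¹ * x j, ?_⟩, fun j => rfl, i, ?_⟩
  · rw [norm_mul, norm_inv]
    exact inv_mul_le_one_of_le₀ (hi j) (norm_nonneg _)
  · exact Subtype.ext (inv_mul_cancel₀ hxi)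

theorem norm_div_p {x : ℚ_[p]} (hx : ‖x‖ = (p : ℝ)⁻¹) : ‖x / p‖ = 1 := by
  rw [norm_div, hx, norm_p, div_self (by simp [(Fact.out : p.Prime).ne_zero])]

noncomputable def qPlus (v : ℤ_[p]) : QuadraticForm ℚ_[p] (Fin 3 → ℚ_[p]) :=
  weightedSumSquares ℚ_[p] ![1, -(v : ℚ_[p]), (p : ℚ_[p])]

theorem anisotropic_qPlus {v : ℤ_[p]} (hv : ¬IsSquare (toZMod v)) : (qPlus v).Anisotropic := by
  intro x hx
  by_contra hx0
  obtain ⟨c, -, y, hy, i, hi⟩ := exists_eq_mul_coe_of_ne_zero hx0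
  have hQy : qPlus v (fun j => (y j : ℚ_[p])) = 0 := by
    rw [show (fun j => (y j : ℚ_[p])) = c • x from funext hy, QuadraticMap.map_smul, hx,
      smul_zero]
  have h : y 0 ^ 2 - v * y 1 ^ 2 + p * y 2 ^ 2 = 0 := by
    rw [qPlus, weightedSumSquares_fin_three_apply] at hQy
    refine coe_eq_zero.mp ?_
    push_cast
    simpa [sub_eq_add_neg] using hQy
  obtain ⟨h0, h1, h2⟩ := toZMod_eq_zero_of_sq_sub_mul_sq_add_p_mul_sq hv h
  have : toZMod (y i) = 0 := by fin_cases i <;> assumption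
  simp [hi] at this

theorem not_anisotropic_of_norm_eq (hp : p ≠ 2) {w : Fin 3 → ℚ_[p]} (h0 : w 0 ≠ 0)
    (hw : ∀ i, ‖w i‖ = ‖w 0‖) : ¬(weightedSumSquares ℚ_[p] w).Anisotropic := by
  have hn : ‖w 0‖ ≠ 0 := norm_ne_zero_iff.mpr h0
  obtain ⟨x, y, hxy⟩ := exists_mul_sq_add_mul_sq_eq hp (a := w 1 / w 0) (b := w 2 / w 0)
    (c := -1) (by rw [norm_div, hw, div_self hn]) (by rw [norm_div, hw, div_self hn])
    (by rw [norm_neg, norm_one])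
  intro h
  have := h ![1, x, y] <| by
    rw [weightedSumSquares_fin_three_apply]
    field_simp at hxy
    simp only [Matrix.cons_val_zero, Matrix.cons_val_one, Matrix.cons_val_two,
      Matrix.tail_cons, Matrix.head_cons]
    linear_combination hxy
  simpa using congrFun this 0

theorem exists_equivalent_smul_qPlus_of_norm_one_one_inv (hp : p ≠ 2) {v : ℤ_[p]}
    (hv : ¬IsSquare (toZMod v)) {a b c : ℚ_[p]} (ha : ‖a‖ = 1) (hb : ‖b‖ = 1)
    (hc : ‖c‖ = (p : ℝ)⁻¹) (hQ : (weightedSumSquares ℚ_[p] ![a, b, c]).Anisotropic) :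
    ∃ t : ℚ_[p], t ≠ 0 ∧ (weightedSumSquares ℚ_[p] ![a, b, c]).Equivalent (t • qPlus v) := by
  have hp0 : (p : ℚ_[p]) ≠ 0 := Nat.cast_ne_zero.mpr (Fact.out : p.Prime).ne_zero
  have ha0 : a ≠ 0 := norm_ne_zero_iff.mp (by rw [ha]; exact one_ne_zero)
  have hb0 : b ≠ 0 := norm_ne_zero_iff.mp (by rw [hb]; exact one_ne_zero)
  have hv0 : (v : ℚ_[p]) ≠ 0 := coe_ne_zero.mpr fun h0 => hv (by simp [h0])
  set γ := c / p
  have hγ : ‖γ‖ = 1 := norm_div_p hc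
  have hγ0 : γ ≠ 0 := norm_ne_zero_iff.mp (by rw [hγ]; exact one_ne_zero)
  -- `-ab` is not a square, since otherwise `a x² + b y²` would be isotropic
  have hab : ¬IsSquare (-(a * b)) := by
    rintro ⟨k, hk⟩
    have := hQ ![k, a, 0] <| by
      rw [weightedSumSquares_fin_three_apply]
      simp only [Matrix.cons_val_zero, Matrix.cons_val_one, Matrix.cons_val_two,
        Matrix.tail_cons, Matrix.head_cons]
      linear_combination -a * hk
    simpa [ha0] using congrFun this 1
  obtain ⟨m, hm⟩ :=
    (isSquare_or_isSquare_mul hp hv (by simp [norm_mul, ha, hb])).resolve_left hab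
  have hm0 : m ≠ 0 := by
    rintro rfl
    simp [hv0, ha0, hb0] at hm
  obtain ⟨x, y, hxy⟩ := exists_mul_sq_add_mul_sq_eq hp ha hb hγ
  refine ⟨γ, hγ0, ?_⟩
  rw [qPlus, smul_weightedSumSquares]
  refine (equivalent_weightedSumSquares_of_mul_sq_add_mul_sq (c := c) hγ0 hxy).symm.trans ?_
  refine equivalent_weightedSumSquares_of_mul_sq (k := ![1, m / v, 1]) ?_ fun i => ?_
  · intro i; fin_cases i <;> simp [hm0, hv0]
  · fin_cases i <;> simp
    · field_simp
      linear_combination hm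
    · exact div_mul_cancel₀ c hp0

theorem exists_equivalent_smul_qPlus_of_norm_one_inv_inv (hp : p ≠ 2) {v : ℤ_[p]}
    (hv : ¬IsSquare (toZMod v)) {a b c : ℚ_[p]} (ha : ‖a‖ = 1) (hb : ‖b‖ = (p : ℝ)⁻¹)
    (hc : ‖c‖ = (p : ℝ)⁻¹) (hQ : (weightedSumSquares ℚ_[p] ![a, b, c]).Anisotropic) :
    ∃ t : ℚ_[p], t ≠ 0 ∧ (weightedSumSquares ℚ_[p] ![a, b, c]).Equivalent (t • qPlus v) := by
  have hp0 : (p : ℚ_[p]) ≠ 0 := Nat.cast_ne_zero.mpr (Fact.out : p.Prime).ne_zero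
  have hscale : weightedSumSquares ℚ_[p] ![a, b, c] =
      (p : ℚ_[p]) • weightedSumSquares ℚ_[p] ![a / p, b / p, c / p] := by
    rw [smul_weightedSumSquares]
    congr 1
    ext i; fin_cases i <;> simp [mul_div_cancel₀ _ hp0]
  have e : (weightedSumSquares ℚ_[p] ![a / p, b / p, c / p]).Equivalent
      (weightedSumSquares ℚ_[p] ![b / p, c / p, a * p]) :=
    (equivalent_weightedSumSquares_of_mul_sq (k := ![(p : ℚ_[p])⁻¹, 1, 1])
      (fun i => by fin_cases i <;> simp [hp0]) fun i => by fin_cases i <;> simp [field]).trans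
      (equivalent_weightedSumSquares_rotate _ _ _)
  rw [hscale] at hQ ⊢
  obtain ⟨t, ht, et⟩ := exists_equivalent_smul_qPlus_of_norm_one_one_inv hp hv
    (norm_div_p hb) (norm_div_p hc) (by rw [norm_mul, ha, norm_p, one_mul])
    (e.anisotropic hQ.of_smul)
  exact ⟨p * t, mul_ne_zero hp0 ht, by rw [← smul_smul]; exact (e.trans et).smul _⟩

theorem exists_equivalent_smul_qPlus (hp : p ≠ 2) {v : ℤ_[p]} (hv : ¬IsSquare (toZMod v))
    {V : Type*} [AddCommGroup V] [Module ℚ_[p] V] [FiniteDimensional ℚ_[p] V]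
    (hV : Module.finrank ℚ_[p] V = 3) {Q : QuadraticForm ℚ_[p] V} (hQ : Q.Anisotropic) :
    ∃ t : ℚ_[p], t ≠ 0 ∧ Q.Equivalent (t • qPlus v) := by
  have : Invertible (2 : ℚ_[p]) := invertibleOfNonzero two_ne_zero
  obtain ⟨w₀, e₀⟩ := Q.equivalent_weightedSumSquares
  replace e₀ := e₀.trans (equivalent_weightedSumSquares_comp (finCongr hV.symm) w₀)
  obtain ⟨w, hw, e₁⟩ := exists_equivalent_weightedSumSquares_norm
    (e₀.anisotropic hQ).weightedSumSquares_ne_zero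
  have hQw := e₁.anisotropic (e₀.anisotropic hQ)
  have hp1 : (p : ℝ)⁻¹ ≠ 1 := inv_ne_one.mpr (by exact_mod_cast (Fact.out : p.Prime).ne_one)
  by_cases h : ∃ i j, ‖w i‖ = 1 ∧ ‖w j‖ = (p : ℝ)⁻¹
  · obtain ⟨i, j, hi, hj⟩ := h
    have hij : i ≠ j := fun hij => hp1 (by rw [← hj, ← hi, hij])
    obtain ⟨σ, rfl, rfl⟩ := Fin.exists_perm_apply_zero_apply_two hij
    have e₂ : (weightedSumSquares ℚ_[p] w).Equivalent
        (weightedSumSquares ℚ_[p] ![w (σ 0), w (σ 1), w (σ 2)]) := by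
      convert equivalent_weightedSumSquares_comp σ w using 2
      ext k; fin_cases k <;> rfl
    obtain ⟨t, ht, e₃⟩ := (hw (σ 1)).elim
      (exists_equivalent_smul_qPlus_of_norm_one_one_inv hp hv hi · hj (e₂.anisotropic hQw))
      (exists_equivalent_smul_qPlus_of_norm_one_inv_inv hp hv hi · hj (e₂.anisotropic hQw))
    exact ⟨t, ht, e₀.trans (e₁.trans (e₂.trans e₃))⟩
  · simp only [not_exists, not_and] at h
    refine absurd hQw (not_anisotropic_of_norm_eq hp (hQw.weightedSumSquares_ne_zero 0) ?_)
    intro i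
    rcases hw i with hi | hi <;> rcases hw 0 with h0 | h0
    · rw [hi, h0]
    · exact absurd h0 (h i 0 hi)
    · exact absurd hi (h 0 i h0)
    · rw [hi, h0]

end Padic

theorem stmt1 (p : ℕ) [Fact p.Prime] (hp2 : 2 < p)
    (u : ℤ_[p]) (hu : ‖u‖ = 1) (husq : ¬ ∃ y : ℚ_[p], y ^ 2 = (u : ℚ_[p]))
    (v : ℤ_[p]) (hv3 : p % 4 = 3 → v = -1) (hv1 : p % 4 = 1 → v = -u) :
    (QuadraticMap.weightedSumSquares ℚ_[p]
        ![(1 : ℚ_[p]), -(v : ℚ_[p]), (p : ℚ_[p])]).Anisotropic ∧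
    (∀ Q : QuadraticForm ℚ_[p] (Fin 3 → ℚ_[p]), Q.Anisotropic →
      ∃ t : ℚ_[p], t ≠ 0 ∧
        Q.Equivalent (t • QuadraticMap.weightedSumSquares ℚ_[p]
          ![(1 : ℚ_[p]), -(v : ℚ_[p]), (p : ℚ_[p])])) := by
  have hp : p ≠ 2 := hp2.ne'
  have hv : ¬IsSquare (PadicInt.toZMod v) := by
    obtain h | h : p % 4 = 1 ∨ p % 4 = 3 := by
      have := Nat.odd_iff.mp ((Fact.out : p.Prime).odd_of_ne_two hp)
      omega
    · rw [hv1 h, map_neg]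
      intro hsq
      have hu' : IsSquare (PadicInt.toZMod u) := by
        simpa using (ZMod.exists_sq_eq_neg_one_iff.mpr (by omega)).mul hsq
      obtain ⟨y, hy⟩ := (PadicInt.isSquare_of_isSquare_toZMod hp
        (PadicInt.toZMod_ne_zero_iff.mpr hu) hu').map PadicInt.Coe.ringHom
      exact husq ⟨y, by rw [pow_two]; exact hy.symm⟩
    · rw [hv3 h, map_neg, map_one]
      exact fun hsq => ZMod.exists_sq_eq_neg_one_iff.mp hsq h
  exact ⟨Padic.anisotropic_qPlus hv, fun Q hQ =>
    Padic.exists_equivalent_smul_qPlus hp hv (Module.finrank_fin_fun ℚ_[p]) hQ⟩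
end

section
/- For every κ ∈ {-v, p, up}, every matrix L ∈ SO(2)_{p,κ} has all its entries in ℤ_p (i.e. |ℓ_{ij}|_p ≤ 1 for all i, j), and SO(2)_{p,κ} is a compact subset of the space of 2×2 matrices over ℚ_p with the topology induced by the norm ‖L‖_p = max_{i,j} |ℓ_{ij}|_p. -/
/-!
An element of `SO2set p a b` with `a ≠ 0` has the shape `!![α, -b γ / a; γ, α]` with
`a α² + b γ² = a`, so integrality of its entries reduces to integrality of the solutions of
this conic. For `b = p` and `‖a‖ = 1` the two terms have valuations of different parity, so
neither can exceed the unit sum. For `a = 1` and a unit `b = -v`, two terms of equal norm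
`> 1` would make `α / γ` a square root of `v` modulo `p`, hence in `ℚ_p` by Hensel's lemma;
but `v` is a nonsquare, by the first supplement to quadratic reciprocity. Compactness
follows because the group is closed and contained in the compact set `M₂(ℤ_p)`.
-/

open scoped Matrix

/-- The special orthogonal group of the binary quadratic form with matrix
`diag(a, b)` over `ℚ_p`. -/
def SO2set (p : ℕ) [Fact p.Prime] (a b : ℚ_[p]) : Set (Matrix (Fin 2) (Fin 2) ℚ_[p]) :=
  {L | L.transpose * Matrix.diagonal ![a, b] * L = Matrix.diagonal ![a, b] ∧ L.det = 1}

theorem isSquare_neg_iff_of_isSquare_neg_one {R : Type*} [CommMonoid R] [HasDistribNeg R]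
    (h : IsSquare (-1 : R)) {x : R} : IsSquare (-x) ↔ IsSquare x := by
  refine ⟨fun hx => ?_, fun hx => neg_one_mul x ▸ h.mul hx⟩
  simpa using h.mul hx

theorem Matrix.isCompact_of_isClosed_of_norm_apply_le {m n E : Type*} [SeminormedAddCommGroup E]
    [ProperSpace E] {S : Set (Matrix m n E)} (hS : IsClosed S) (r : ℝ)
    (h : ∀ L ∈ S, ∀ i j, ‖L i j‖ ≤ r) : IsCompact S :=
  (isCompact_univ_pi fun _ => isCompact_univ_pi fun _ => isCompact_closedBall 0 r).of_isClosed_subset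
    hS fun L hL i _ j _ => mem_closedBall_zero_iff.2 (h L hL i j)

namespace PadicInt

variable {p : ℕ} [Fact p.Prime]

theorem toZMod_eq_zero_iff_norm_lt_one {x : ℤ_[p]} : toZMod x = 0 ↔ ‖x‖ < 1 := by
  rw [← RingHom.mem_ker, ker_toZMod, IsLocalRing.mem_maximalIdeal, mem_nonunits]

theorem norm_eq_one_iff_toZMod_ne_zero {x : ℤ_[p]} : ‖x‖ = 1 ↔ toZMod x ≠ 0 := by
  rw [ne_eq, toZMod_eq_zero_iff_norm_lt_one, not_lt]
  exact ⟨ge_of_eq, (norm_le_one x).antisymm⟩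

theorem norm_two_eq_one (hp : p ≠ 2) : ‖(2 : ℤ_[p])‖ = 1 := by
  rw [norm_eq_one_iff_toZMod_ne_zero, map_ofNat, ← Nat.cast_ofNat, ne_eq,
    ZMod.natCast_eq_zero_iff]
  exact fun h => hp ((Nat.prime_dvd_prime_iff_eq Fact.out Nat.prime_two).1 h)

theorem isSquare_coe_iff_isSquare_toZMod (hp : p ≠ 2) {x : ℤ_[p]} (hx : ‖x‖ = 1) :
    IsSquare (x : ℚ_[p]) ↔ IsSquare (toZMod x) := by
  constructor
  · rintro ⟨y, hy⟩
    have hy1 : ‖y‖ ≤ 1 := by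
      have : ‖y‖ * ‖y‖ = 1 := by rw [← norm_mul, ← hy, padic_norm_e_of_padicInt, hx]
      nlinarith [norm_nonneg y]
    obtain ⟨y, rfl⟩ : ∃ y' : ℤ_[p], (y' : ℚ_[p]) = y := ⟨⟨y, hy1⟩, rfl⟩
    have hxy : x = y * y := PadicInt.ext (by push_cast; exact hy)
    exact ⟨toZMod y, by rw [hxy, map_mul]⟩
  · rintro ⟨r, hr⟩
    set a : ℤ_[p] := (r.val : ℤ_[p])
    have ha : toZMod a = r := by simp [a]
    have hfa : ‖a ^ 2 - x‖ < 1 := by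
      rw [← toZMod_eq_zero_iff_norm_lt_one, map_sub, map_pow, ha, hr, sq, sub_self]
    have hnorm_a : ‖a‖ = 1 := by
      rw [norm_eq_one_iff_toZMod_ne_zero, ha]
      rintro rfl
      rw [norm_eq_one_iff_toZMod_ne_zero, hr, mul_zero] at hx
      exact hx rfl
    obtain ⟨z, hz, -⟩ := hensels_lemma (F := Polynomial.X ^ 2 - Polynomial.C x) (a := a) (by
      simpa [one_add_one_eq_two, norm_two_eq_one hp, hnorm_a] using hfa)
    have hzx : x = z * z := by
      simp only [map_sub, map_pow, Polynomial.aeval_X, Polynomial.aeval_C,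
        Algebra.algebraMap_self, RingHom.id_apply, sub_eq_zero] at hz
      rw [← hz, sq]
    exact ⟨z, by rw [hzx, PadicInt.coe_mul]⟩

end PadicInt

namespace Padic

variable {p : ℕ} [Fact p.Prime]

theorem isSquare_neg_one_iff (hp : p ≠ 2) : IsSquare (-1 : ℚ_[p]) ↔ p % 4 ≠ 3 := by
  have h := PadicInt.isSquare_coe_iff_isSquare_toZMod hp (x := -1) (by simp)
  rw [PadicInt.coe_neg, PadicInt.coe_one, map_neg, map_one] at h
  rw [h, ZMod.exists_sq_eq_neg_one_iff]

theorem norm_eq_norm_iff_valuation_eq {x y : ℚ_[p]} (hx : x ≠ 0) (hy : y ≠ 0) :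
    ‖x‖ = ‖y‖ ↔ x.valuation = y.valuation := by
  have hp : (1 : ℝ) < p := by exact_mod_cast (Fact.out : p.Prime).one_lt
  rw [norm_eq_zpow_neg_valuation hx, norm_eq_zpow_neg_valuation hy,
    (zpow_right_injective₀ (zero_lt_one.trans hp) hp.ne').eq_iff, neg_inj]

theorem norm_le_one_of_norm_sq_add_mul_sq_le_one (hp : p ≠ 2) {b : ℤ_[p]} (hb : ‖b‖ = 1)
    (hnsq : ¬ IsSquare (-(b : ℚ_[p]))) {α γ : ℚ_[p]} (h : ‖α ^ 2 + b * γ ^ 2‖ ≤ 1) :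
    ‖α‖ ≤ 1 ∧ ‖γ‖ ≤ 1 := by
  have hb' : ‖(b : ℚ_[p])‖ = 1 := by rwa [PadicInt.padic_norm_e_of_padicInt]
  rcases ne_or_eq ‖α‖ ‖γ‖ with hne | heq
  · have hne' : ‖α ^ 2‖ ≠ ‖(b : ℚ_[p]) * γ ^ 2‖ := by
      rwa [norm_mul, hb', one_mul, norm_pow, norm_pow, Ne,
        pow_left_inj₀ (norm_nonneg _) (norm_nonneg _) two_ne_zero]
    rwa [add_eq_max_of_ne hne', max_le_iff, norm_mul, hb', one_mul, norm_pow, norm_pow,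
      pow_le_one_iff_of_nonneg (norm_nonneg _) two_ne_zero,
      pow_le_one_iff_of_nonneg (norm_nonneg _) two_ne_zero] at h
  rw [← heq, and_self]
  by_contra! hα
  have hγ0 : γ ≠ 0 := norm_pos_iff.1 (heq ▸ zero_lt_one.trans hα)
  -- α / γ is then a unit whose reduction mod p is a square root of -b
  obtain ⟨x, hx⟩ : ∃ x : ℤ_[p], (x : ℚ_[p]) = α / γ :=
    ⟨⟨α / γ, by rw [norm_div, heq, div_self (norm_ne_zero_iff.2 hγ0)]⟩, rfl⟩
  have hred : ‖x ^ 2 + b‖ < 1 := by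
    have hcoe : ((x ^ 2 + b : ℤ_[p]) : ℚ_[p]) = (α ^ 2 + b * γ ^ 2) / γ ^ 2 := by
      push_cast
      rw [hx]
      field_simp
    rw [← PadicInt.padic_norm_e_of_padicInt, hcoe, norm_div, norm_pow,
      div_lt_one (by positivity)]
    exact h.trans_lt (one_lt_pow₀ (heq ▸ hα) two_ne_zero)
  have hsq : IsSquare (PadicInt.toZMod (-b)) := by
    refine ⟨PadicInt.toZMod x, ?_⟩
    have := PadicInt.toZMod_eq_zero_iff_norm_lt_one.2 hred
    rw [map_add, map_pow] at this
    rw [map_neg]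
    linear_combination -this
  apply hnsq
  simpa using (PadicInt.isSquare_coe_iff_isSquare_toZMod hp (by rwa [norm_neg])).2 hsq

theorem norm_le_one_of_norm_mul_sq_add_p_mul_sq_le_one {a α γ : ℚ_[p]} (ha : ‖a‖ = 1)
    (h : ‖a * α ^ 2 + p * γ ^ 2‖ ≤ 1) : ‖α‖ ≤ 1 ∧ ‖γ‖ ≤ 1 := by
  have hp0 : (p : ℚ_[p]) ≠ 0 := Nat.cast_ne_zero.2 (Fact.out : p.Prime).ne_zero
  rcases eq_or_ne γ 0 with rfl | hγ0
  · simpa [ha, pow_le_one_iff_of_nonneg] using h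
  -- the valuations of the two terms have different parities
  have hne : ‖a * α ^ 2‖ ≠ ‖(p : ℚ_[p]) * γ ^ 2‖ := by
    rw [norm_mul a, ha, one_mul]
    rcases eq_or_ne α 0 with rfl | hα0
    · simp [hγ0, (Fact.out : p.Prime).ne_zero]
    rw [Ne, norm_eq_norm_iff_valuation_eq (pow_ne_zero 2 hα0) (mul_ne_zero hp0 (pow_ne_zero 2 hγ0)),
      valuation_mul hp0 (pow_ne_zero 2 hγ0), valuation_pow, valuation_pow, valuation_p]
    omega
  rw [add_eq_max_of_ne hne, max_le_iff] at h
  obtain ⟨hα, hγ⟩ := h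
  constructor
  · rw [norm_mul, ha, one_mul, norm_pow] at hα
    exact (pow_le_one_iff_of_nonneg (norm_nonneg _) two_ne_zero).1 hα
  · rw [norm_le_one_iff_val_nonneg, valuation_mul hp0 (pow_ne_zero 2 hγ0), valuation_pow,
      valuation_p] at hγ
    rw [norm_le_one_iff_val_nonneg]
    omega

theorem norm_eq_one_and_not_isSquare_of_mod_four (hp : p ≠ 2) {u v : ℤ_[p]} (hu : ‖u‖ = 1)
    (husq : ¬ IsSquare (u : ℚ_[p])) (hv3 : p % 4 = 3 → v = -1) (hv1 : p % 4 = 1 → v = -u) :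
    ‖v‖ = 1 ∧ ¬ IsSquare (v : ℚ_[p]) := by
  rcases Nat.odd_mod_four_iff.1 (Nat.odd_iff.1 ((Fact.out : p.Prime).odd_of_ne_two hp)) with h1 | h3
  · rw [hv1 h1, norm_neg, PadicInt.coe_neg,
      isSquare_neg_iff_of_isSquare_neg_one ((isSquare_neg_one_iff hp).2 (by omega))]
    exact ⟨hu, husq⟩
  · simpa [hv3 h3, isSquare_neg_one_iff hp] using h3

end Padic

namespace SO2set

theorem isClosed (p : ℕ) [Fact p.Prime] (a b : ℚ_[p]) : IsClosed (SO2set p a b) :=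
  (isClosed_eq (by fun_prop) continuous_const).inter (isClosed_eq (by fun_prop) continuous_const)

variable {p : ℕ} [Fact p.Prime] {a b : ℚ_[p]}

theorem entries_of_mem (ha : a ≠ 0) {L : Matrix (Fin 2) (Fin 2) ℚ_[p]} (hL : L ∈ SO2set p a b) :
    a * L 0 0 ^ 2 + b * L 1 0 ^ 2 = a ∧ a * L 0 1 = -(b * L 1 0) ∧ L 1 1 = L 0 0 := by
  obtain ⟨horth, hdet⟩ := hL
  rw [← Matrix.ext_iff] at horth
  have e00 := horth 0 0
  have e01 := horth 0 1
  simp only [Matrix.mul_apply, Matrix.transpose_apply, Fin.sum_univ_two, Matrix.diagonal_apply_eq,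
    Matrix.diagonal_apply_ne _ zero_ne_one, Matrix.diagonal_apply_ne _ one_ne_zero,
    Matrix.cons_val_zero, Matrix.cons_val_one] at e00 e01
  rw [Matrix.det_fin_two] at hdet
  have h00 : a * L 0 0 ^ 2 + b * L 1 0 ^ 2 = a := by linear_combination e00
  have h01 : a * (L 0 0 * L 0 1) + b * (L 1 0 * L 1 1) = 0 := by linear_combination e01
  refine ⟨h00, ?_, mul_left_cancel₀ ha ?_⟩
  · linear_combination -(L 0 1) * h00 + L 0 0 * h01 - b * L 1 0 * hdet
  · linear_combination -(L 1 1) * h00 + L 1 0 * h01 + a * L 0 0 * hdet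

theorem norm_apply_le_one (ha : ‖a‖ = 1) (hb : ‖b‖ ≤ 1)
    (hform : ∀ α γ : ℚ_[p], a * α ^ 2 + b * γ ^ 2 = a → ‖α‖ ≤ 1 ∧ ‖γ‖ ≤ 1)
    {L : Matrix (Fin 2) (Fin 2) ℚ_[p]} (hL : L ∈ SO2set p a b) (i j : Fin 2) :
    ‖L i j‖ ≤ 1 := by
  obtain ⟨hcol, h01, h11⟩ := entries_of_mem (norm_ne_zero_iff.1 (ha ▸ one_ne_zero)) hL
  obtain ⟨hα, hγ⟩ := hform _ _ hcol
  have hβ : ‖L 0 1‖ ≤ 1 := by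
    have := congrArg norm h01
    rw [norm_mul, ha, one_mul, norm_neg, norm_mul] at this
    rw [this]
    exact mul_le_one₀ hb (norm_nonneg _) hγ
  fin_cases i <;> fin_cases j
  exacts [hα, hβ, hγ, h11 ▸ hα]

theorem norm_apply_le_one_and_isCompact (ha : ‖a‖ = 1) (hb : ‖b‖ ≤ 1)
    (hform : ∀ α γ : ℚ_[p], a * α ^ 2 + b * γ ^ 2 = a → ‖α‖ ≤ 1 ∧ ‖γ‖ ≤ 1) :
    (∀ L ∈ SO2set p a b, ∀ i j, ‖L i j‖ ≤ 1) ∧ IsCompact (SO2set p a b) :=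
  have hbound := fun L (hL : L ∈ SO2set p a b) => norm_apply_le_one ha hb hform hL
  ⟨hbound, Matrix.isCompact_of_isClosed_of_norm_apply_le (isClosed p a b) 1 hbound⟩

end SO2set

theorem stmt3 (p : ℕ) [Fact p.Prime] (hp2 : 2 < p)
    (u : ℤ_[p]) (hu : ‖u‖ = 1) (husq : ¬ ∃ y : ℚ_[p], y ^ 2 = (u : ℚ_[p]))
    (v : ℤ_[p]) (hv3 : p % 4 = 3 → v = -1) (hv1 : p % 4 = 1 → v = -u) :
    ∀ a b : ℚ_[p],
      ((a, b) ∈ ({((1 : ℚ_[p]), -(v : ℚ_[p])), ((1 : ℚ_[p]), (p : ℚ_[p])),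
          ((u : ℚ_[p]), (p : ℚ_[p]))} : Set (ℚ_[p] × ℚ_[p]))) →
      (∀ L ∈ SO2set p a b, ∀ i j, ‖L i j‖ ≤ 1) ∧ IsCompact (SO2set p a b) := by
  intro a b hab
  suffices hform : ‖a‖ = 1 ∧ ‖b‖ ≤ 1 ∧
      ∀ α γ : ℚ_[p], a * α ^ 2 + b * γ ^ 2 = a → ‖α‖ ≤ 1 ∧ ‖γ‖ ≤ 1 from
    SO2set.norm_apply_le_one_and_isCompact hform.1 hform.2.1 hform.2.2
  have hu' : ‖(u : ℚ_[p])‖ = 1 := by rwa [PadicInt.padic_norm_e_of_padicInt]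
  have hp : ‖(p : ℚ_[p])‖ ≤ 1 := Padic.norm_p_lt_one.le
  have hpform (c : ℚ_[p]) (hc : ‖c‖ = 1) (α γ : ℚ_[p]) (h : c * α ^ 2 + p * γ ^ 2 = c) :
      ‖α‖ ≤ 1 ∧ ‖γ‖ ≤ 1 :=
    Padic.norm_le_one_of_norm_mul_sq_add_p_mul_sq_le_one hc (by rw [h, hc])
  simp only [Set.mem_insert_iff, Set.mem_singleton_iff, Prod.mk.injEq] at hab
  rcases hab with ⟨rfl, rfl⟩ | ⟨rfl, rfl⟩ | ⟨rfl, rfl⟩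
  · obtain ⟨hv, hvsq⟩ := Padic.norm_eq_one_and_not_isSquare_of_mod_four hp2.ne' hu
      (fun ⟨y, hy⟩ => husq ⟨y, by rw [hy, sq]⟩) hv3 hv1
    refine ⟨norm_one, by rw [norm_neg, PadicInt.padic_norm_e_of_padicInt, hv], fun α γ h => ?_⟩
    have h' : α ^ 2 + ((-v : ℤ_[p]) : ℚ_[p]) * γ ^ 2 = 1 := by
      push_cast
      linear_combination h
    exact Padic.norm_le_one_of_norm_sq_add_mul_sq_le_one hp2.ne' (by rw [norm_neg, hv])
      (by simpa using hvsq) (by rw [h', norm_one])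
  · exact ⟨norm_one, hp, hpform 1 norm_one⟩
  · exact ⟨hu', hp, hpform u hu'⟩
end
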